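/- Let T be a contraction on a complex Hilbert space H. Then the set H_0 of vectors h ∈ H satisfying ‖T^n h‖ = ‖h‖ = ‖(T*)^n h‖ for all natural numbers n ≥ 1 is a closed linear subspace of H. -/

import Mathlib

open ContinuousLinearMap Filter
open scoped InnerProductSpace

noncomputable section

/-! For a contraction `S`, `‖S x‖ = ‖x‖` holds exactly when `S† S x = x`, so the set is the
intersection of the kernels of the operators `1 - (Tⁿ)† Tⁿ` and `1 - (T†ⁿ)† T†ⁿ`. -/

theorem norm_pow_le_one_of_norm_le_one {R : Type*} [SeminormedRing R] {a : R} (ha : ‖a‖ ≤ 1)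
    {n : ℕ} (hn : 1 ≤ n) : ‖a ^ n‖ ≤ 1 :=
  (norm_pow_le' a hn).trans (pow_le_one₀ (norm_nonneg a) ha)

namespace ContinuousLinearMap

variable {𝕜 E : Type*} [RCLike 𝕜] [NormedAddCommGroup E] [InnerProductSpace 𝕜 E]
  [CompleteSpace E]

/- `‖S† S x - x‖² = ‖S† S x‖² - 2‖S x‖² + ‖x‖² ≤ ‖x‖² - ‖S x‖²`, since `‖S†‖ = ‖S‖ ≤ 1`. -/
theorem norm_apply_eq_iff_adjoint_apply_apply {S : E →L[𝕜] E} (hS : ‖S‖ ≤ 1) (x : E) :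
    ‖S x‖ = ‖x‖ ↔ adjoint S (S x) = x := by
  have hre : RCLike.re ⟪adjoint S (S x), x⟫_𝕜 = ‖S x‖ ^ 2 := by
    rw [adjoint_inner_left, inner_self_eq_norm_sq]
  constructor
  · intro hSx
    have hle : ‖adjoint S (S x)‖ ≤ 1 * ‖S x‖ :=
      (adjoint S).le_of_opNorm_le (by rwa [LinearIsometryEquiv.norm_map]) (S x)
    have hsq : ‖adjoint S (S x) - x‖ ^ 2 ≤ 0 := by
      rw [norm_sub_sq (𝕜 := 𝕜), hre, ← hSx]
      nlinarith [norm_nonneg (adjoint S (S x)), norm_nonneg (S x)]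
    rw [← sub_eq_zero, ← norm_eq_zero]
    nlinarith [norm_nonneg (adjoint S (S x) - x)]
  · intro hx
    have hsq : ‖S x‖ ^ 2 = ‖x‖ ^ 2 := by
      rw [← hre, hx, ← inner_self_eq_norm_sq (𝕜 := 𝕜)]
    exact (sq_eq_sq₀ (norm_nonneg _) (norm_nonneg _)).mp hsq

theorem mem_ker_one_sub_adjoint_mul_self_iff {S : E →L[𝕜] E} (hS : ‖S‖ ≤ 1) (x : E) :
    x ∈ (1 - adjoint S * S).ker ↔ ‖S x‖ = ‖x‖ := by
  rw [norm_apply_eq_iff_adjoint_apply_apply hS, LinearMap.mem_ker, coe_coe, sub_apply,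
    one_apply_eq_self, mul_apply_eq_comp, sub_eq_zero, eq_comm]

end ContinuousLinearMap

theorem unitary_part_closed_subspace
    {H : Type*} [NormedAddCommGroup H] [InnerProductSpace ℂ H] [CompleteSpace H]
    (T : H →L[ℂ] H) (hT : ‖T‖ ≤ 1) :
    ∃ K : Submodule ℂ H, IsClosed (K : Set H) ∧
      (K : Set H) = {h : H | ∀ n : ℕ, 1 ≤ n →
        ‖(T ^ n) h‖ = ‖h‖ ∧ ‖((adjoint T) ^ n) h‖ = ‖h‖} := by
  let K : Submodule ℂ H := ⨅ n : ℕ, ⨅ _ : 1 ≤ n,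
    (1 - adjoint (T ^ n) * T ^ n).ker ⊓
      (1 - adjoint (adjoint T ^ n) * adjoint T ^ n).ker
  have hK : (K : Set H) = {h : H | ∀ n : ℕ, 1 ≤ n →
      ‖(T ^ n) h‖ = ‖h‖ ∧ ‖((adjoint T) ^ n) h‖ = ‖h‖} := by
    ext h
    simp only [K, SetLike.mem_coe, Submodule.mem_iInf, Submodule.mem_inf, Set.mem_ofPred_eq]
    refine forall₂_congr fun n hn => ?_
    have hT' : ‖adjoint T‖ ≤ 1 := by rwa [LinearIsometryEquiv.norm_map]
    rw [mem_ker_one_sub_adjoint_mul_self_iff (norm_pow_le_one_of_norm_le_one hT hn),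
      mem_ker_one_sub_adjoint_mul_self_iff (norm_pow_le_one_of_norm_le_one hT' hn)]
  refine ⟨K, ?_, hK⟩
  rw [hK]
  simp only [Set.ofPred_forall]
  exact isClosed_iInter fun n => isClosed_iInter fun _ =>
    (isClosed_eq (by fun_prop) (by fun_prop)).inter (isClosed_eq (by fun_prop) (by fun_prop))
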